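/- Fix Heston-type parameters κ > 0, θ > 0, ξ > 0, ρ ∈ (−1,1) with κ > ρξ. Then: (a) the quadratic Q(u) := (κ − ρξu)² + u·ξ²·(1 − u) is strictly positive for u ∈ (u₋, u₊) and vanishes at u = u₋ and u = u₊; (b) u₋ < 0 and u₊ > 1; (c) the function V(u) := (κθ/ξ²)·(κ − ρξu − d(u)) is infinitely differentiable and strictly convex on (u₋, u₊), with V(0) = V(1) = 0; (d) V is essentially smooth: V'(u) → −∞ as u ↓ u₋ and V'(u) → +∞ as u ↑ u₊; and (e) the one-sided limits lim_{u↓u₋} V(u) and lim_{u↑u₊} V(u) are both finite. -/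

import Mathlib

open Filter Topology Set

/-- `η := √(ξ²(1−ρ²) + (2κ−ρξ)²)`. -/
noncomputable def etaH (κ ξ ρ : ℝ) : ℝ :=
  Real.sqrt (ξ ^ 2 * (1 - ρ ^ 2) + (2 * κ - ρ * ξ) ^ 2)

/-- `u₋ := (ξ − 2κρ − η)/(2ξ(1−ρ²))`. -/
noncomputable def uMinusH (κ ξ ρ : ℝ) : ℝ :=
  (ξ - 2 * κ * ρ - etaH κ ξ ρ) / (2 * ξ * (1 - ρ ^ 2))

/-- `u₊ := (ξ − 2κρ + η)/(2ξ(1−ρ²))`. -/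
noncomputable def uPlusH (κ ξ ρ : ℝ) : ℝ :=
  (ξ - 2 * κ * ρ + etaH κ ξ ρ) / (2 * ξ * (1 - ρ ^ 2))

/-- `d(u) := √((κ − ρξu)² + u ξ² (1 − u))`. -/
noncomputable def dH (κ ξ ρ : ℝ) (u : ℝ) : ℝ :=
  Real.sqrt ((κ - ρ * ξ * u) ^ 2 + u * ξ ^ 2 * (1 - u))

/-- `V(u) := (κθ/ξ²)(κ − ρξu − d(u))`. -/
noncomputable def VH (κ θ ξ ρ : ℝ) (u : ℝ) : ℝ :=
  κ * θ / ξ ^ 2 * (κ - ρ * ξ * u - dH κ ξ ρ u)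

lemma eta_sq (κ ξ ρ : ℝ) (h1ρ : 0 < 1 - ρ ^ 2) :
    etaH κ ξ ρ ^ 2 = ξ ^ 2 + 4 * κ ^ 2 - 4 * κ * ρ * ξ := by
  rw [etaH, Real.sq_sqrt (by nlinarith [sq_nonneg (2 * κ - ρ * ξ), sq_nonneg ξ])]
  ring

lemma heston_sum (κ ξ ρ : ℝ) (hξ : 0 < ξ) (h1ρ : 0 < 1 - ρ ^ 2) :
    ξ ^ 2 * (1 - ρ ^ 2) * (uMinusH κ ξ ρ + uPlusH κ ξ ρ) = ξ ^ 2 - 2 * κ * ρ * ξ := by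
  rw [uMinusH, uPlusH]; field_simp; ring

lemma heston_prod (κ ξ ρ : ℝ) (hξ : 0 < ξ) (h1ρ : 0 < 1 - ρ ^ 2) :
    ξ ^ 2 * (1 - ρ ^ 2) * (uMinusH κ ξ ρ * uPlusH κ ξ ρ) = -κ ^ 2 := by
  have hη2 := eta_sq κ ξ ρ h1ρ
  rw [uMinusH, uPlusH]; field_simp
  linear_combination (-1) * hη2

lemma heston_diff (κ ξ ρ : ℝ) (hξ : 0 < ξ) (h1ρ : 0 < 1 - ρ ^ 2) :
    ξ ^ 2 * (1 - ρ ^ 2) * (uPlusH κ ξ ρ - uMinusH κ ξ ρ) = ξ * etaH κ ξ ρ := by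
  rw [uMinusH, uPlusH]; field_simp; ring

lemma sqrt_strict_concave_aux (A B M C a : ℝ) (hA : 0 < A) (hB : 0 < B)
    (ha : 0 < a) (hb : 0 < 1 - a) (hC : 0 < C)
    (hM : M = a * A + (1 - a) * B + C) :
    a * Real.sqrt A + (1 - a) * Real.sqrt B < Real.sqrt M := by
  rw [Real.lt_sqrt (add_nonneg (mul_nonneg ha.le (Real.sqrt_nonneg _))
    (mul_nonneg hb.le (Real.sqrt_nonneg _)))]
  nlinarith [mul_nonneg (mul_pos ha hb).le (sq_nonneg (Real.sqrt A - Real.sqrt B)),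
    Real.sq_sqrt hA.le, Real.sq_sqrt hB.le]

/-- Lemma 5.10 of the paper: for Heston-type parameters with `κ > ρξ`:
(a) `Q(u) := (κ − ρξu)² + uξ²(1−u) > 0` on `(u₋, u₊)` and vanishes at the endpoints;
(b) `u₋ < 0 < 1 < u₊`; (c) `V` is smooth and strictly convex on `(u₋, u₊)` with
`V(0) = V(1) = 0`; (d) `V` is essentially smooth: `V' → −∞` at `u₋⁺` and `V' → +∞` at `u₊⁻`;
(e) the one-sided limits of `V` at `u₋` and `u₊` are finite. -/
theorem statement14 (κ θ ξ ρ : ℝ) (hκ : 0 < κ) (hθ : 0 < θ) (hξ : 0 < ξ)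
    (hρ : ρ ∈ Set.Ioo (-1 : ℝ) 1) (hκρξ : ρ * ξ < κ) :
    (∀ u ∈ Set.Ioo (uMinusH κ ξ ρ) (uPlusH κ ξ ρ),
        0 < (κ - ρ * ξ * u) ^ 2 + u * ξ ^ 2 * (1 - u)) ∧
      ((κ - ρ * ξ * uMinusH κ ξ ρ) ^ 2 + uMinusH κ ξ ρ * ξ ^ 2 * (1 - uMinusH κ ξ ρ) = 0 ∧
        (κ - ρ * ξ * uPlusH κ ξ ρ) ^ 2 + uPlusH κ ξ ρ * ξ ^ 2 * (1 - uPlusH κ ξ ρ) = 0) ∧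
      (uMinusH κ ξ ρ < 0 ∧ 1 < uPlusH κ ξ ρ) ∧
      (ContDiffOn ℝ (⊤ : ℕ∞) (VH κ θ ξ ρ) (Set.Ioo (uMinusH κ ξ ρ) (uPlusH κ ξ ρ)) ∧
        StrictConvexOn ℝ (Set.Ioo (uMinusH κ ξ ρ) (uPlusH κ ξ ρ)) (VH κ θ ξ ρ) ∧
        VH κ θ ξ ρ 0 = 0 ∧ VH κ θ ξ ρ 1 = 0) ∧
      (Tendsto (deriv (VH κ θ ξ ρ)) (𝓝[>] (uMinusH κ ξ ρ)) atBot ∧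
        Tendsto (deriv (VH κ θ ξ ρ)) (𝓝[<] (uPlusH κ ξ ρ)) atTop) ∧
      ((∃ L₁ : ℝ, Tendsto (VH κ θ ξ ρ) (𝓝[>] (uMinusH κ ξ ρ)) (𝓝 L₁)) ∧
        ∃ L₂ : ℝ, Tendsto (VH κ θ ξ ρ) (𝓝[<] (uPlusH κ ξ ρ)) (𝓝 L₂)) := by
  obtain ⟨hρ1, hρ2⟩ := hρ
  have h1ρ : 0 < 1 - ρ ^ 2 := by nlinarith
  have ha : 0 < ξ ^ 2 * (1 - ρ ^ 2) := by positivity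
  have hηpos : 0 < etaH κ ξ ρ :=
    Real.sqrt_pos.2 (by nlinarith [sq_nonneg (2 * κ - ρ * ξ)])
  set um := uMinusH κ ξ ρ with hum_def
  set up := uPlusH κ ξ ρ with hup_def
  clear_value um up
  have hsum := heston_sum κ ξ ρ hξ h1ρ
  have hprod := heston_prod κ ξ ρ hξ h1ρ
  have hdiff := heston_diff κ ξ ρ hξ h1ρ
  rw [← hum_def, ← hup_def] at hsum hprod hdiff
  have hfac : ∀ u : ℝ, (κ - ρ * ξ * u) ^ 2 + u * ξ ^ 2 * (1 - u)
      = ξ ^ 2 * (1 - ρ ^ 2) * ((up - u) * (u - um)) := fun u => by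
    linear_combination (-u) * hsum + hprod
  have hlt : um < up := by nlinarith [mul_pos hξ hηpos]
  -- (a)
  have hQpos : ∀ u ∈ Set.Ioo um up, 0 < (κ - ρ * ξ * u) ^ 2 + u * ξ ^ 2 * (1 - u) := by
    intro u hu
    rw [hfac u]
    exact mul_pos ha (mul_pos (by linarith [hu.2]) (by linarith [hu.1]))
  have hz1 : (κ - ρ * ξ * um) ^ 2 + um * ξ ^ 2 * (1 - um) = 0 := by rw [hfac]; ring
  have hz2 : (κ - ρ * ξ * up) ^ 2 + up * ξ ^ 2 * (1 - up) = 0 := by rw [hfac]; ring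
  -- (b)
  have hum0 : um < 0 := by
    by_contra h
    push_neg at h
    have hup0 : 0 < up := lt_of_le_of_lt h hlt
    nlinarith [hfac 0, mul_pos ha hup0, mul_pos hκ hκ]
  have hup1 : 1 < up := by
    by_contra h
    push_neg at h
    have h1um : 0 < 1 - um := by linarith
    nlinarith [hfac 1, mul_pos ha h1um, mul_pos (sub_pos.2 hκρξ) (sub_pos.2 hκρξ)]
  -- values
  have hcpos : 0 < κ * θ / ξ ^ 2 := by positivity
  have hV0 : VH κ θ ξ ρ 0 = 0 := by
    have hd0 : dH κ ξ ρ 0 = κ := by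
      rw [dH]
      norm_num
      exact Real.sqrt_sq hκ.le
    rw [VH, hd0]; ring
  have hV1 : VH κ θ ξ ρ 1 = 0 := by
    have hd1 : dH κ ξ ρ 1 = κ - ρ * ξ := by
      rw [dH]
      have h : (κ - ρ * ξ * 1) ^ 2 + 1 * ξ ^ 2 * (1 - 1) = (κ - ρ * ξ) ^ 2 := by ring
      rw [h, Real.sqrt_sq (by linarith)]
    rw [VH, hd1]; ring
  -- smoothness
  have hcd : ContDiffOn ℝ (⊤ : ℕ∞) (VH κ θ ξ ρ) (Set.Ioo um up) := by
    intro u hu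
    have hne : (κ - ρ * ξ * u) ^ 2 + u * ξ ^ 2 * (1 - u) ≠ 0 := (hQpos u hu).ne'
    have hQc : ContDiffAt ℝ (⊤ : ℕ∞) (fun u : ℝ => (κ - ρ * ξ * u) ^ 2 + u * ξ ^ 2 * (1 - u)) u := by
      fun_prop
    have hdd : ContDiffAt ℝ (⊤ : ℕ∞) (dH κ ξ ρ) u := (Real.contDiffAt_sqrt hne).comp u hQc
    have hlin : ContDiffAt ℝ (⊤ : ℕ∞) (fun u : ℝ => κ - ρ * ξ * u) u := by fun_prop
    exact (contDiffAt_const.mul (hlin.sub hdd)).contDiffWithinAt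
  -- strict convexity
  have hscv : StrictConvexOn ℝ (Set.Ioo um up) (VH κ θ ξ ρ) := by
    refine ⟨convex_Ioo um up, fun x hx y hy hxy a b ha' hb' hab => ?_⟩
    have hb1 : b = 1 - a := by linarith
    subst hb1
    set A := (κ - ρ * ξ * x) ^ 2 + x * ξ ^ 2 * (1 - x) with hA_def
    clear_value A
    set B := (κ - ρ * ξ * y) ^ 2 + y * ξ ^ 2 * (1 - y) with hB_def
    clear_value B
    set z := a * x + (1 - a) * y with hz_def
    clear_value z
    have hzmem : z ∈ Set.Ioo um up := by
      rw [hz_def]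
      simpa [smul_eq_mul] using (convex_Ioo um up) hx hy ha'.le hb'.le hab
    set M := (κ - ρ * ξ * z) ^ 2 + z * ξ ^ 2 * (1 - z) with hM_def
    clear_value M
    have hA : 0 < A := hA_def ▸ hQpos x hx
    have hB : 0 < B := hB_def ▸ hQpos y hy
    have hM : M = a * A + (1 - a) * B + ξ ^ 2 * (1 - ρ ^ 2) * (a * (1 - a) * (x - y) ^ 2) := by
      rw [hM_def, hA_def, hB_def, hz_def]; ring
    have hxy2 : 0 < (x - y) ^ 2 :=
      lt_of_le_of_ne (sq_nonneg _) (Ne.symm (pow_ne_zero 2 (sub_ne_zero.2 hxy)))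
    have key : a * Real.sqrt A + (1 - a) * Real.sqrt B < Real.sqrt M :=
      sqrt_strict_concave_aux A B M _ a hA hB ha' hb' (by positivity) hM
    have hDA : dH κ ξ ρ x = Real.sqrt A := by rw [hA_def]; rfl
    have hDB : dH κ ξ ρ y = Real.sqrt B := by rw [hB_def]; rfl
    have hDM : dH κ ξ ρ z = Real.sqrt M := by rw [hM_def]; rfl
    simp only [smul_eq_mul, VH, hDA, hDB]
    have hgoal : a * (κ * θ / ξ ^ 2 * (κ - ρ * ξ * x - Real.sqrt A))
        + (1 - a) * (κ * θ / ξ ^ 2 * (κ - ρ * ξ * y - Real.sqrt B))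
        - κ * θ / ξ ^ 2 * (κ - ρ * ξ * z - Real.sqrt M)
        = κ * θ / ξ ^ 2 * (Real.sqrt M - (a * Real.sqrt A + (1 - a) * Real.sqrt B)) := by
      rw [hz_def]; ring
    have hpos := mul_pos hcpos (sub_pos.2 key)
    rw [← hz_def, hDM]
    linarith [hgoal, hpos]
  -- derivative formula
  have hV' : ∀ u ∈ Set.Ioo um up, HasDerivAt (VH κ θ ξ ρ)
      (κ * θ / ξ ^ 2 * (-(ρ * ξ) - 1 / (2 * Real.sqrt ((κ - ρ * ξ * u) ^ 2 + u * ξ ^ 2 * (1 - u)))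
        * (2 * (κ - ρ * ξ * u) * (-(ρ * ξ)) + (ξ ^ 2 * (1 - u) + u * ξ ^ 2 * (-1))))) u := by
    intro u hu
    have hne : (κ - ρ * ξ * u) ^ 2 + u * ξ ^ 2 * (1 - u) ≠ 0 := (hQpos u hu).ne'
    have h1 : HasDerivAt (fun u : ℝ => κ - ρ * ξ * u) (-(ρ * ξ)) u := by
      simpa using (hasDerivAt_const u κ).fun_sub ((hasDerivAt_id u).const_mul (ρ * ξ))
    have h2 : HasDerivAt (fun u : ℝ => (κ - ρ * ξ * u) ^ 2) (2 * (κ - ρ * ξ * u) * (-(ρ * ξ))) u := by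
      simpa using h1.fun_pow 2
    have h3 : HasDerivAt (fun u : ℝ => u * ξ ^ 2 * (1 - u)) (ξ ^ 2 * (1 - u) + u * ξ ^ 2 * (-1)) u := by
      have ha1 : HasDerivAt (fun u : ℝ => u * ξ ^ 2) (ξ ^ 2) u := by
        simpa using (hasDerivAt_id u).mul_const (ξ ^ 2)
      have ha2 : HasDerivAt (fun u : ℝ => 1 - u) (-1) u := by
        simpa using (hasDerivAt_const u (1 : ℝ)).fun_sub (hasDerivAt_id u)
      exact ha1.mul ha2
    have hQd := h2.fun_add h3
    have hsq : HasDerivAt (dH κ ξ ρ)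
        (1 / (2 * Real.sqrt ((κ - ρ * ξ * u) ^ 2 + u * ξ ^ 2 * (1 - u)))
          * (2 * (κ - ρ * ξ * u) * (-(ρ * ξ)) + (ξ ^ 2 * (1 - u) + u * ξ ^ 2 * (-1)))) u := by
      have := (Real.hasDerivAt_sqrt hne).comp u hQd
      unfold dH
      simpa [Function.comp_def] using this
    exact (h1.sub hsq).const_mul (κ * θ / ξ ^ 2)
  -- tendsto of deriv
  have hcont_sqrtQ : Continuous (fun u : ℝ => Real.sqrt ((κ - ρ * ξ * u) ^ 2 + u * ξ ^ 2 * (1 - u))) := by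
    fun_prop
  have hPum : 2 * (κ - ρ * ξ * um) * (-(ρ * ξ)) + (ξ ^ 2 * (1 - um) + um * ξ ^ 2 * (-1))
      = ξ * etaH κ ξ ρ := by
    linear_combination hdiff - hsum
  have hPup : 2 * (κ - ρ * ξ * up) * (-(ρ * ξ)) + (ξ ^ 2 * (1 - up) + up * ξ ^ 2 * (-1))
      = -(ξ * etaH κ ξ ρ) := by
    linear_combination -hdiff - hsum
  have hξη : 0 < ξ * etaH κ ξ ρ := mul_pos hξ hηpos
  have hPcont : Continuous (fun u : ℝ =>
      2 * (κ - ρ * ξ * u) * (-(ρ * ξ)) + (ξ ^ 2 * (1 - u) + u * ξ ^ 2 * (-1))) := by fun_prop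
  -- at um from the right
  have hmemR : Set.Ioo um up ∈ 𝓝[>] um := Ioo_mem_nhdsGT hlt
  have hgR : Tendsto (fun u : ℝ => Real.sqrt ((κ - ρ * ξ * u) ^ 2 + u * ξ ^ 2 * (1 - u)))
      (𝓝[>] um) (𝓝[>] 0) := by
    rw [tendsto_nhdsWithin_iff]
    constructor
    · have := (hcont_sqrtQ.tendsto um).mono_left (nhdsWithin_le_nhds (s := Set.Ioi um))
      simpa [hz1, Real.sqrt_zero] using this
    · filter_upwards [hmemR] with u hu
      exact Real.sqrt_pos.2 (hQpos u hu)
  have hinvR : Tendsto (fun u : ℝ =>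
      (Real.sqrt ((κ - ρ * ξ * u) ^ 2 + u * ξ ^ 2 * (1 - u)))⁻¹) (𝓝[>] um) atTop :=
    tendsto_inv_nhdsGT_zero.comp hgR
  have hPR : Tendsto (fun u : ℝ =>
      2 * (κ - ρ * ξ * u) * (-(ρ * ξ)) + (ξ ^ 2 * (1 - u) + u * ξ ^ 2 * (-1)))
      (𝓝[>] um) (𝓝 (ξ * etaH κ ξ ρ)) := by
    have := (hPcont.tendsto um).mono_left (nhdsWithin_le_nhds (s := Set.Ioi um))
    rwa [hPum] at this
  have hTR : Tendsto (fun u : ℝ =>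
      (2 * (κ - ρ * ξ * u) * (-(ρ * ξ)) + (ξ ^ 2 * (1 - u) + u * ξ ^ 2 * (-1)))
        * (Real.sqrt ((κ - ρ * ξ * u) ^ 2 + u * ξ ^ 2 * (1 - u)))⁻¹) (𝓝[>] um) atTop :=
    hPR.pos_mul_atTop hξη hinvR
  have hdR : Tendsto (deriv (VH κ θ ξ ρ)) (𝓝[>] um) atBot := by
    have h1 : Tendsto (fun u : ℝ => κ * θ / (2 * ξ ^ 2) *
        ((2 * (κ - ρ * ξ * u) * (-(ρ * ξ)) + (ξ ^ 2 * (1 - u) + u * ξ ^ 2 * (-1)))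
          * (Real.sqrt ((κ - ρ * ξ * u) ^ 2 + u * ξ ^ 2 * (1 - u)))⁻¹)) (𝓝[>] um) atTop :=
      hTR.const_mul_atTop (by positivity)
    have h2 := tendsto_atBot_add_const_left (𝓝[>] um) (κ * θ / ξ ^ 2 * (-(ρ * ξ)))
      (tendsto_neg_atTop_atBot.comp h1)
    have h3 : Tendsto (fun u : ℝ => κ * θ / ξ ^ 2 * (-(ρ * ξ) -
        1 / (2 * Real.sqrt ((κ - ρ * ξ * u) ^ 2 + u * ξ ^ 2 * (1 - u)))
        * (2 * (κ - ρ * ξ * u) * (-(ρ * ξ)) + (ξ ^ 2 * (1 - u) + u * ξ ^ 2 * (-1)))))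
        (𝓝[>] um) atBot := by
      refine h2.congr fun u => ?_
      simp only [Function.comp]
      ring
    refine h3.congr' ?_
    filter_upwards [hmemR] with u hu
    exact ((hV' u hu).deriv).symm
  -- at up from the left
  have hmemL : Set.Ioo um up ∈ 𝓝[<] up := Ioo_mem_nhdsLT hlt
  have hgL : Tendsto (fun u : ℝ => Real.sqrt ((κ - ρ * ξ * u) ^ 2 + u * ξ ^ 2 * (1 - u)))
      (𝓝[<] up) (𝓝[>] 0) := by
    rw [tendsto_nhdsWithin_iff]
    constructor
    · have := (hcont_sqrtQ.tendsto up).mono_left (nhdsWithin_le_nhds (s := Set.Iio up))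
      simpa [hz2, Real.sqrt_zero] using this
    · filter_upwards [hmemL] with u hu
      exact Real.sqrt_pos.2 (hQpos u hu)
  have hinvL : Tendsto (fun u : ℝ =>
      (Real.sqrt ((κ - ρ * ξ * u) ^ 2 + u * ξ ^ 2 * (1 - u)))⁻¹) (𝓝[<] up) atTop :=
    tendsto_inv_nhdsGT_zero.comp hgL
  have hPL : Tendsto (fun u : ℝ =>
      2 * (κ - ρ * ξ * u) * (-(ρ * ξ)) + (ξ ^ 2 * (1 - u) + u * ξ ^ 2 * (-1)))
      (𝓝[<] up) (𝓝 (-(ξ * etaH κ ξ ρ))) := by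
    have := (hPcont.tendsto up).mono_left (nhdsWithin_le_nhds (s := Set.Iio up))
    rwa [hPup] at this
  have hTL : Tendsto (fun u : ℝ =>
      (2 * (κ - ρ * ξ * u) * (-(ρ * ξ)) + (ξ ^ 2 * (1 - u) + u * ξ ^ 2 * (-1)))
        * (Real.sqrt ((κ - ρ * ξ * u) ^ 2 + u * ξ ^ 2 * (1 - u)))⁻¹) (𝓝[<] up) atBot :=
    hPL.neg_mul_atTop (by linarith) hinvL
  have hdL : Tendsto (deriv (VH κ θ ξ ρ)) (𝓝[<] up) atTop := by
    have h1 : Tendsto (fun u : ℝ => κ * θ / (2 * ξ ^ 2) *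
        ((2 * (κ - ρ * ξ * u) * (-(ρ * ξ)) + (ξ ^ 2 * (1 - u) + u * ξ ^ 2 * (-1)))
          * (Real.sqrt ((κ - ρ * ξ * u) ^ 2 + u * ξ ^ 2 * (1 - u)))⁻¹)) (𝓝[<] up) atBot :=
      hTL.const_mul_atBot (by positivity)
    have h2 := tendsto_atTop_add_const_left (𝓝[<] up) (κ * θ / ξ ^ 2 * (-(ρ * ξ)))
      (tendsto_neg_atBot_atTop.comp h1)
    have h3 : Tendsto (fun u : ℝ => κ * θ / ξ ^ 2 * (-(ρ * ξ) -
        1 / (2 * Real.sqrt ((κ - ρ * ξ * u) ^ 2 + u * ξ ^ 2 * (1 - u)))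
        * (2 * (κ - ρ * ξ * u) * (-(ρ * ξ)) + (ξ ^ 2 * (1 - u) + u * ξ ^ 2 * (-1)))))
        (𝓝[<] up) atTop := by
      refine h2.congr fun u => ?_
      simp only [Function.comp]
      ring
    refine h3.congr' ?_
    filter_upwards [hmemL] with u hu
    exact ((hV' u hu).deriv).symm
  -- finite limits
  have hVcont : Continuous (VH κ θ ξ ρ) := by
    unfold VH dH
    fun_prop
  refine ⟨hQpos, ⟨hz1, hz2⟩, ⟨hum0, hup1⟩, ⟨hcd, hscv, hV0, hV1⟩, ⟨hdR, hdL⟩,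
    ⟨⟨VH κ θ ξ ρ um, (hVcont.tendsto um).mono_left nhdsWithin_le_nhds⟩,
      ⟨VH κ θ ξ ρ up, (hVcont.tendsto up).mono_left nhdsWithin_le_nhds⟩⟩⟩
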